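/- arXiv:math/0612466 — 7 statements merged into one kernel-verified Lean document; each statement's English description precedes it below -/
import Mathlib

section
/- If an infinite word u over a finite alphabet is not eventually periodic, then its factor complexity satisfies C(n) ≥ n + 1 for all natural numbers n. -/
/-- The factor of the infinite word `u` starting at position `i`, of length `n`. -/
def factorAt {A : Type*} (u : ℕ → A) (i n : ℕ) : List A :=
  (List.range n).map fun j => u (i + j)

/-- Factor complexity: the number of distinct factors of length `n`. -/
noncomputable def complexity {A : Type*} (u : ℕ → A) (n : ℕ) : ℕ :=
  Set.ncard {w : List A | ∃ i, w = factorAt u i n}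

section aux

variable {A : Type*} [Finite A] (u : ℕ → A)

lemma factorAt_eq_ofFn (i n : ℕ) :
    factorAt u i n = List.ofFn (fun j : Fin n => u (i + j)) := by
  apply List.ext_getElem <;> simp [factorAt]

lemma factSet_finite (n : ℕ) : {w : List A | ∃ i, w = factorAt u i n}.Finite := by
  apply Set.Finite.subset (Set.finite_range (fun f : Fin n → A => List.ofFn f))
  rintro w ⟨i, rfl⟩
  exact ⟨fun j => u (i + j), (factorAt_eq_ofFn u i n).symm⟩

lemma take_factorAt (i n : ℕ) : (factorAt u i (n + 1)).take n = factorAt u i n := by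
  apply List.ext_getElem <;> simp [factorAt]

lemma factorAt_succ (i n : ℕ) :
    factorAt u i (n + 1) = u i :: factorAt u (i + 1) n := by
  rw [factorAt_eq_ofFn, factorAt_eq_ofFn, List.ofFn_succ]
  simp [Nat.add_comm, Nat.add_assoc, Nat.add_left_comm]

lemma take_image (n : ℕ) :
    (fun w : List A => w.take n) '' {w | ∃ i, w = factorAt u i (n + 1)}
      = {w | ∃ i, w = factorAt u i n} := by
  ext w
  constructor
  · rintro ⟨v, ⟨i, rfl⟩, rfl⟩
    refine ⟨i, ?_⟩
    show (factorAt u i (n + 1)).take n = _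
    rw [take_factorAt]
  · rintro ⟨i, rfl⟩
    refine ⟨factorAt u i (n + 1), ⟨i, rfl⟩, ?_⟩
    show (factorAt u i (n + 1)).take n = _
    exact take_factorAt u i n

lemma complexity_mono (n : ℕ) : complexity u n ≤ complexity u (n + 1) := by
  rw [complexity, complexity, ← take_image u n]
  exact Set.ncard_image_le (factSet_finite u (n + 1))

/-- If `C(n) = C(n+1)`, extensions are unique. -/
lemma ext_unique (n : ℕ) (hc : complexity u n = complexity u (n + 1))
    {i j : ℕ} (hij : factorAt u i n = factorAt u j n) :
    factorAt u i (n + 1) = factorAt u j (n + 1) := by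
  have hinj : Set.InjOn (fun w : List A => w.take n)
      {w | ∃ i, w = factorAt u i (n + 1)} := by
    apply Set.injOn_of_ncard_image_eq _ (factSet_finite u (n + 1))
    rw [take_image u n]
    simpa only [complexity] using hc
  exact hinj ⟨i, rfl⟩ ⟨j, rfl⟩
    (by show (factorAt u i (n+1)).take n = (factorAt u j (n+1)).take n
        rw [take_factorAt, take_factorAt]; exact hij)

/-- If `C(n) = C(n+1)`, the word is eventually periodic. -/
lemma eventually_periodic (n : ℕ) (hc : complexity u n = complexity u (n + 1)) :
    ∃ N p : ℕ, 1 ≤ p ∧ ∀ i, N ≤ i → u (i + p) = u i := by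
  obtain ⟨i, j, hne, heq⟩ :=
    Finite.exists_ne_map_eq_of_infinite (fun i : ℕ => fun t : Fin n => u (i + t))
  -- reduce to the case i < j by symmetry
  have main : ∀ i j : ℕ, i < j → (fun t : Fin n => u (i + t)) = (fun t : Fin n => u (j + t)) →
      ∃ N p : ℕ, 1 ≤ p ∧ ∀ m, N ≤ m → u (m + p) = u m := by
    intro i j hlt hfe
    have h0 : factorAt u i n = factorAt u j n := by
      rw [factorAt_eq_ofFn, factorAt_eq_ofFn, hfe]
    have hstep : ∀ k : ℕ, factorAt u (i + k) (n + 1) = factorAt u (j + k) (n + 1) := by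
      intro k
      induction k with
      | zero => simpa using ext_unique u n hc h0
      | succ k ih =>
        have htail : factorAt u (i + k + 1) n = factorAt u (j + k + 1) n := by
          have := factorAt_succ u (i + k) n ▸ factorAt_succ u (j + k) n ▸ ih
          exact (List.cons.injEq _ _ _ _ ▸ this).2
        have := ext_unique u n hc htail
        rwa [show i + (k + 1) = i + k + 1 by omega, show j + (k + 1) = j + k + 1 by omega]
    have hhead : ∀ k : ℕ, u (i + k) = u (j + k) := by
      intro k
      have := hstep k
      rw [factorAt_succ, factorAt_succ] at this
      exact (List.cons.injEq _ _ _ _ ▸ this).1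
    refine ⟨i, j - i, by omega, fun m hm => ?_⟩
    have := (hhead (m - i)).symm
    rw [show i + (m - i) = m by omega, show j + (m - i) = m + (j - i) by omega] at this
    exact this
  rcases hne.lt_or_gt with hlt | hlt
  · exact main i j hlt heq
  · exact main j i hlt heq.symm

lemma complexity_zero : complexity u 0 = 1 := by
  have : {w : List A | ∃ i, w = factorAt u i 0} = {([] : List A)} := by
    ext w
    simp [factorAt]
  rw [complexity, this, Set.ncard_singleton]

end aux

/-- If an infinite word over a finite alphabet is not eventually periodic,
then its factor complexity satisfies `C(n) ≥ n + 1` for all `n`. -/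
theorem stmt_0 {A : Type*} [Finite A] (u : ℕ → A)
    (h : ¬ ∃ N p : ℕ, 1 ≤ p ∧ ∀ i, N ≤ i → u (i + p) = u i) :
    ∀ n : ℕ, n + 1 ≤ complexity u n := by
  intro n
  induction n with
  | zero => simp [complexity_zero]
  | succ n ih =>
    by_contra hlt
    push_neg at hlt
    have hmono := complexity_mono u n
    have hc : complexity u n = complexity u (n + 1) := by omega
    exact h (eventually_periodic u n hc)
end

section
/- Let t_1, ..., t_m be nonnegative integers with t_1 ≥ 1 and t_m ≥ 1, and let φ be the substitution on the alphabet {0,1,...,m−1} defined by φ(i) = 0^{t_{i+1}}(i+1) for 0 ≤ i ≤ m−2 and φ(m−1) = 0^{t_m}. Then φ is primitive: there exists k ∈ ℕ such that for all letters a, b, the letter a occurs in φ^k(b). In fact k = 2m works. -/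
/-- The canonical substitution of a simple Parry number is primitive;
in fact every letter occurs in `φ^{2m}(b)` for every letter `b`. -/
theorem stmt_5 (m : ℕ) (hm : 0 < m) (t : ℕ → ℕ)
    (ht1 : 1 ≤ t 1) (htm : 1 ≤ t m)
    (φ : Fin m → List (Fin m))
    (hφ : ∀ i : Fin m, φ i =
      if h : (i : ℕ) + 1 < m then
        List.replicate (t ((i : ℕ) + 1)) (⟨0, hm⟩ : Fin m) ++ [(⟨(i : ℕ) + 1, h⟩ : Fin m)]
      else
        List.replicate (t m) (⟨0, hm⟩ : Fin m)) :
    ∀ a b : Fin m, a ∈ (fun w : List (Fin m) => w.flatMap φ)^[2 * m] [b] := by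
  set F : List (Fin m) → List (Fin m) := fun w => w.flatMap φ with hF
  -- monotonicity of iterates w.r.t. membership
  have mono : ∀ (k : ℕ) (u v : List (Fin m)), (∀ x ∈ u, x ∈ v) →
      ∀ a ∈ F^[k] u, a ∈ F^[k] v := by
    intro k
    induction k with
    | zero => intro u v h a ha; exact h a ha
    | succ k ih =>
      intro u v h a ha
      rw [Function.iterate_succ_apply] at ha ⊢
      refine ih (F u) (F v) ?_ a ha
      intro x hx
      rw [hF, List.mem_flatMap] at hx ⊢
      obtain ⟨y, hy, hxy⟩ := hx
      exact ⟨y, h y hy, hxy⟩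
  have z0 : (⟨0, hm⟩ : Fin m) ∈ φ ⟨0, hm⟩ := by
    rw [hφ]
    by_cases h : (0 : ℕ) + 1 < m
    · simp only [h, dif_pos, List.mem_append]
      left
      refine List.mem_replicate.2 ⟨?_, rfl⟩
      norm_num
      omega
    · simp only [h, dif_neg]
      exact List.mem_replicate.2 ⟨by omega, rfl⟩
  -- zero persists
  have zper : ∀ k, (⟨0, hm⟩ : Fin m) ∈ F^[k] [⟨0, hm⟩] := by
    intro k
    induction k with
    | zero => simp
    | succ k ih =>
      rw [Function.iterate_succ_apply]
      refine mono k [⟨0, hm⟩] (F [⟨0, hm⟩]) ?_ _ ih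
      intro x hx
      simp only [List.mem_singleton] at hx
      subst hx
      rw [hF]; simp only [List.flatMap_singleton]
      exact z0
  -- chain up: j ∈ F^[j] [0]
  have chain : ∀ j (hj : j < m), (⟨j, hj⟩ : Fin m) ∈ F^[j] [⟨0, hm⟩] := by
    intro j
    induction j with
    | zero => intro hj; simp
    | succ j ih =>
      intro hj
      rw [Function.iterate_succ_apply']
      rw [hF]; rw [List.mem_flatMap]
      refine ⟨⟨j, by omega⟩, ih (by omega), ?_⟩
      rw [hφ]
      simp only [dif_pos hj, List.mem_append]
      right; simp
  -- reach zero: 0 ∈ F^[m - j] [j]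
  have reach : ∀ d j (hj : j < m), d = m - j → (⟨0, hm⟩ : Fin m) ∈ F^[m - j] [⟨j, hj⟩] := by
    intro d
    induction d with
    | zero => intro j hj hd; omega
    | succ d ih =>
      intro j hj hd
      by_cases h : j + 1 < m
      · have : m - j = (m - (j + 1)) + 1 := by omega
        rw [this, Function.iterate_succ_apply]
        refine mono (m - (j + 1)) [⟨j + 1, h⟩] (F [⟨j, hj⟩]) ?_ _ (ih (j+1) h (by omega))
        intro x hx
        simp only [List.mem_singleton] at hx
        subst hx
        rw [hF]; simp only [List.flatMap_singleton]
        rw [hφ]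
        simp only [dif_pos h, List.mem_append]
        right; simp
      · have hj1 : j = m - 1 := by omega
        have : m - j = 1 := by omega
        rw [this]
        simp only [Function.iterate_one]
        rw [hF]; simp only [List.flatMap_singleton]
        rw [hφ]
        simp only [dif_neg h]
        exact List.mem_replicate.2 ⟨by omega, rfl⟩
  intro a b
  -- 0 ∈ F^[m] [b]
  have h0b : (⟨0, hm⟩ : Fin m) ∈ F^[m] [b] := by
    have hb : (b : ℕ) < m := b.isLt
    have h1 := reach (m - (b : ℕ)) b hb rfl
    simp only [Fin.eta] at h1
    have hiter : F^[m] [b] = F^[(b : ℕ)] (F^[m - (b : ℕ)] [b]) := by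
      rw [← Function.iterate_add_apply]
      congr 1
      omega
    rw [hiter]
    exact mono b [⟨0, hm⟩] (F^[m - (b:ℕ)] [b]) (by simpa using h1) _ (zper b)
  -- a ∈ F^[m] [0]
  have ha0 : a ∈ F^[m] [⟨0, hm⟩] := by
    have hja : (a : ℕ) < m := a.isLt
    have h1 := chain (a : ℕ) hja
    simp only [Fin.eta] at h1
    have hiter : F^[m] [(⟨0, hm⟩ : Fin m)] = F^[(a : ℕ)] (F^[m - (a : ℕ)] [⟨0, hm⟩]) := by
      rw [← Function.iterate_add_apply]
      congr 1
      omega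
    rw [hiter]
    exact mono a [⟨0, hm⟩] (F^[m - (a:ℕ)] [⟨0, hm⟩]) (by simpa using zper (m - a)) _ h1
  have hiter : F^[2 * m] [b] = F^[m] (F^[m] [b]) := by
    rw [← Function.iterate_add_apply]
    congr 1
    omega
  rw [hiter]
  exact mono m [⟨0, hm⟩] (F^[m] [b]) (by simpa using h0b) _ ha0
end

section
/- Let β be the golden ratio (1+√5)/2. Then the set of distances between consecutive nonnegative β-integers is exactly {1, β−1}. -/
/-!
Write `val S = ∑ i ∈ S, φ ^ i` for a set `S` of exponents without two consecutive integers.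
Since `φ ^ (k + 2) = φ ^ (k + 1) + φ ^ k`, such a set with all exponents below `k` satisfies
`val S + gap S ≤ φ ^ k`, where `gap S` is `φ - 1` if `0 ∈ S` and `1` otherwise. Comparing
leading exponents, this gives `val S + gap S ≤ val T` whenever `val S < val T`. Conversely
`val S + gap S` is again such a value: add `1 = φ ^ 0`, resp. `φ = φ ^ 1` after removing `φ ^ 0`,
and resolve carries with `φ ^ k + φ ^ (k + 1) = φ ^ (k + 2)`. Hence the successor of `val S`
is `val S + gap S`, and the gaps are exactly `1` and `φ - 1`.
-/

section ConsecutiveOrder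

variable {α : Type*} [LinearOrder α] {Z : Set α} {x y : α}

lemma isLeast_iff_consecutive :
    IsLeast {z | z ∈ Z ∧ x < z} y ↔ y ∈ Z ∧ x < y ∧ ∀ z ∈ Z, ¬(x < z ∧ z < y) := by
  refine ⟨fun ⟨⟨hy, hxy⟩, hle⟩ => ⟨hy, hxy, fun z hz ⟨hxz, hzy⟩ => ?_⟩,
    fun ⟨hy, hxy, hgap⟩ =>
      ⟨⟨hy, hxy⟩, fun z ⟨hz, hxz⟩ => not_lt.1 fun hzy => hgap z hz ⟨hxz, hzy⟩⟩⟩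
  exact (hle ⟨hz, hxz⟩).not_gt hzy

end ConsecutiveOrder

namespace GoldenRatioExpansion

open Finset goldenRatio Real

def IsAdmissible (S : Finset ℕ) : Prop := ∀ i ∈ S, i + 1 ∉ S

noncomputable def val (S : Finset ℕ) : ℝ := ∑ i ∈ S, φ ^ i

noncomputable def gap (S : Finset ℕ) : ℝ := if 0 ∈ S then φ - 1 else 1

def betaIntegers : Set ℝ := {x | ∃ S, IsAdmissible S ∧ x = val S}

variable {S T : Finset ℕ} {a k : ℕ}

lemma goldenRatio_pow_add_two (k : ℕ) : φ ^ (k + 2) = φ ^ (k + 1) + φ ^ k := by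
  linarith [goldenRatio_pow_sub_goldenRatio_pow k]

lemma IsAdmissible.mono (hT : IsAdmissible T) (h : S ⊆ T) : IsAdmissible S :=
  fun i hi hi1 => hT i (h hi) (h hi1)

lemma isAdmissible_empty : IsAdmissible ∅ := by simp [IsAdmissible]

lemma isAdmissible_singleton (a : ℕ) : IsAdmissible {a} := by simp [IsAdmissible]

lemma IsAdmissible.insert (hS : IsAdmissible S) (ha : ∀ i ∈ S, a + 1 < i) :
    IsAdmissible (insert a S) := by
  intro i hi hi1
  rw [mem_insert] at hi hi1
  rcases hi with rfl | hi
  · rcases hi1 with h | h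
    · omega
    · exact (ha _ h).ne rfl
  · rcases hi1 with h | h
    · exact absurd (ha i hi) (by omega)
    · exact hS i hi h

lemma val_nonneg (S : Finset ℕ) : 0 ≤ val S :=
  sum_nonneg fun i _ => (pow_pos goldenRatio_pos i).le

lemma pow_le_val (ha : a ∈ S) : φ ^ a ≤ val S :=
  single_le_sum (fun i _ => (pow_pos goldenRatio_pos i).le) ha

lemma val_insert (ha : a ∉ S) : val (insert a S) = φ ^ a + val S := sum_insert ha

lemma val_erase_add (ha : a ∈ S) : val (S.erase a) + φ ^ a = val S := sum_erase_add S _ ha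

lemma gap_pos (S : Finset ℕ) : 0 < gap S := by
  unfold gap; split_ifs <;> linarith [one_lt_goldenRatio]

lemma gap_erase (ha : a ≠ 0) : gap (S.erase a) = gap S := by
  simp [gap, mem_erase, Ne.symm ha]

lemma val_add_gap_le_pow (hS : IsAdmissible S) (hk : ∀ i ∈ S, i < k) :
    val S + gap S ≤ φ ^ k := by
  induction k using Nat.strong_induction_on generalizing S with
  | _ k ih =>
  match k with
  | 0 =>
    obtain rfl : S = ∅ := eq_empty_of_forall_notMem fun i hi => by simpa using hk i hi
    simp [val, gap]
  | 1 =>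
    have : S ⊆ {0} := fun i hi => by simpa using hk i hi
    rcases subset_singleton_iff.1 this with rfl | rfl
    · simp [val, gap, one_lt_goldenRatio.le]
    · simp [val, gap]
  | k + 2 =>
    by_cases hk1 : k + 1 ∈ S
    · have hlow : ∀ i ∈ S.erase (k + 1), i < k := fun i hi => by
        have hiS := mem_of_mem_erase hi
        have : i ≠ k := fun h => hS i hiS (h ▸ hk1)
        have := ne_of_mem_erase hi
        have := hk i hiS
        omega
      have := ih k (by omega) (hS.mono (erase_subset _ _)) hlow
      rw [gap_erase (by omega)] at this
      linarith [val_erase_add hk1, goldenRatio_pow_add_two k]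
    · have hlow : ∀ i ∈ S, i < k + 1 := fun i hi => by
        have := hk i hi
        have : i ≠ k + 1 := fun h => hk1 (h ▸ hi)
        omega
      exact (ih (k + 1) (by omega) hS hlow).trans
        (pow_le_pow_right₀ one_lt_goldenRatio.le (by omega))

lemma val_lt_pow (hS : IsAdmissible S) (hk : ∀ i ∈ S, i < k) : val S < φ ^ k := by
  linarith [val_add_gap_le_pow hS hk, gap_pos S]

lemma val_add_gap_le_of_lt (hS : IsAdmissible S) (hT : IsAdmissible T) (hST : val S < val T) :
    val S + gap S ≤ val T := by
  induction T using Finset.induction_on_max generalizing S with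
  | empty => exact absurd hST (by simpa [val] using val_nonneg S)
  | insert a T hTa ih =>
    have haT : a ∉ T := fun h => (hTa a h).false
    have hSa : ∀ i ∈ S, i ≤ a := fun i hi => not_lt.1 fun hai => (lt_irrefl (val S)) <|
      calc val S < val (insert a T) := hST
        _ < φ ^ (a + 1) := val_lt_pow hT fun j hj => by
          rcases mem_insert.1 hj with rfl | hj
          · omega
          · exact (hTa j hj).trans (by omega)
        _ ≤ φ ^ i := pow_le_pow_right₀ one_lt_goldenRatio.le hai
        _ ≤ val S := pow_le_val hi
    rw [val_insert haT] at hST ⊢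
    by_cases haS : a ∈ S
    · rw [← val_erase_add haS] at hST ⊢
      have hlt : val (S.erase a) < val T := by linarith
      have ha0 : a ≠ 0 := by
        rintro rfl
        obtain rfl : T = ∅ := eq_empty_of_forall_notMem fun j hj => by simpa using hTa j hj
        exact absurd hlt (by simpa [val] using val_nonneg _)
      have := ih (hS.mono (erase_subset _ _)) (hT.mono (subset_insert _ _)) hlt
      rw [gap_erase ha0] at this
      linarith
    · have hSa' : ∀ i ∈ S, i < a := fun i hi => lt_of_le_of_ne (hSa i hi) fun h => haS (h ▸ hi)
      linarith [val_add_gap_le_pow hS hSa', val_nonneg T]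

lemma exists_val_eq_val_add_pow (hS : IsAdmissible S) (hk : ∀ i ∈ S, k < i) :
    ∃ T, IsAdmissible T ∧ val T = val S + φ ^ k := by
  induction S using Finset.induction_on_min generalizing k with
  | empty => exact ⟨{k}, isAdmissible_singleton k, by simp [val]⟩
  | insert a S hSa ih =>
    have haS : a ∉ S := fun h => (hSa a h).false
    have hka : k < a := hk a (mem_insert_self a S)
    rw [val_insert haS]
    by_cases hak : a = k + 1
    · subst hak
      have hS' : IsAdmissible S := hS.mono (subset_insert _ _)
      have hk2 : ∀ i ∈ S, k + 2 < i := fun i hi => by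
        have := hSa i hi
        have : i ≠ k + 2 := fun h => hS (k + 1) (mem_insert_self _ _) (h ▸ mem_insert_of_mem hi)
        omega
      obtain ⟨T, hT, hval⟩ := ih hS' hk2
      exact ⟨T, hT, by rw [hval, goldenRatio_pow_add_two]; ring⟩
    · refine ⟨insert k (insert a S), hS.insert fun i hi => ?_, ?_⟩
      · have := hk i hi
        rcases mem_insert.1 hi with rfl | hi
        · omega
        · have := hSa i hi
          omega
      · rw [val_insert (fun h => (hk k h).false), val_insert haS]
        ring

lemma exists_val_eq_val_add_gap (hS : IsAdmissible S) :
    ∃ T, IsAdmissible T ∧ val T = val S + gap S := by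
  by_cases h0 : 0 ∈ S
  · have hgt : ∀ i ∈ S.erase 0, 1 < i := fun i hi => by
      have := ne_of_mem_erase hi
      have : i ≠ 1 := by rintro rfl; exact hS 0 h0 (mem_of_mem_erase hi)
      omega
    obtain ⟨T, hT, hval⟩ := exists_val_eq_val_add_pow (hS.mono (erase_subset _ _)) hgt
    refine ⟨T, hT, ?_⟩
    rw [hval, ← val_erase_add h0, gap, if_pos h0]
    ring
  · obtain ⟨T, hT, hval⟩ :=
      exists_val_eq_val_add_pow hS fun i hi => Nat.pos_of_ne_zero fun h => h0 (h ▸ hi)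
    exact ⟨T, hT, by rw [hval, gap, if_neg h0, pow_zero]⟩

lemma isLeast_val_add_gap (hS : IsAdmissible S) :
    IsLeast {z | z ∈ betaIntegers ∧ val S < z} (val S + gap S) := by
  obtain ⟨T, hT, hval⟩ := exists_val_eq_val_add_gap hS
  refine ⟨⟨⟨T, hT, hval.symm⟩, by linarith [gap_pos S]⟩, ?_⟩
  rintro _ ⟨⟨U, hU, rfl⟩, hlt⟩
  exact val_add_gap_le_of_lt hS hU hlt

lemma gap_mem_distances (hS : IsAdmissible S) :
    ∃ x ∈ betaIntegers, ∃ y ∈ betaIntegers,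
      x < y ∧ (∀ z ∈ betaIntegers, ¬(x < z ∧ z < y)) ∧ gap S = y - x := by
  obtain ⟨hy, hxy, hcons⟩ := isLeast_iff_consecutive.1 (isLeast_val_add_gap hS)
  exact ⟨val S, ⟨S, hS, rfl⟩, _, hy, hxy, hcons, by ring⟩

end GoldenRatioExpansion

/-- For the golden ratio `β = (1+√5)/2`, the set of distances between
consecutive nonnegative `β`-integers is exactly `{1, β − 1}`. -/
theorem stmt_8 (β : ℝ) (hβ : β = (1 + Real.sqrt 5) / 2)
    (Z : Set ℝ)
    (hZ : Z = {x : ℝ | ∃ S : Finset ℕ, (∀ i ∈ S, i + 1 ∉ S) ∧ x = ∑ i ∈ S, β ^ i}) :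
    {d : ℝ | ∃ x ∈ Z, ∃ y ∈ Z, x < y ∧ (∀ z ∈ Z, ¬(x < z ∧ z < y)) ∧ d = y - x}
      = {1, β - 1} := by
  obtain rfl : β = Real.goldenRatio := hβ
  obtain rfl : Z = GoldenRatioExpansion.betaIntegers := hZ
  ext d
  constructor
  · rintro ⟨_, ⟨S, hS, rfl⟩, y, hy, hxy, hcons, rfl⟩
    rw [(isLeast_iff_consecutive.2 ⟨hy, hxy, hcons⟩).unique
      (GoldenRatioExpansion.isLeast_val_add_gap hS), add_sub_cancel_left,
      GoldenRatioExpansion.gap]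
    split_ifs <;> simp
  · rintro (rfl | rfl)
    · simpa [GoldenRatioExpansion.gap] using
        GoldenRatioExpansion.gap_mem_distances GoldenRatioExpansion.isAdmissible_empty
    · simpa [GoldenRatioExpansion.gap] using
        GoldenRatioExpansion.gap_mem_distances (GoldenRatioExpansion.isAdmissible_singleton 0)
end

section
/- Let u_β be the fixed point of the substitution φ(i) = 0^{t_{i+1}}(i+1) (0 ≤ i ≤ m−2), φ(m−1) = 0^{t_m}, with t_1 ≥ t_i for all i and t_m ≥ 1. If t_m ≥ 2, then the word 0^{t_1 + t_m − 1} is a left special factor of u_β that is not a prefix of u_β. -/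
/-- `w` is a factor of the infinite word `u`. -/
def IsFactor {A : Type*} (u : ℕ → A) (w : List A) : Prop :=
  ∃ i, w = factorAt u i w.length

/-- `u` is a fixed point of the substitution `φ`. -/
def SubFixed {A : Type*} (u : ℕ → A) (φ : A → List A) : Prop :=
  ∀ n : ℕ, factorAt u 0 ((factorAt u 0 n).flatMap φ).length = (factorAt u 0 n).flatMap φ

/-! Write `N = t₁ + t_m - 1`. Every letter occurs in `u_β`, so `φ(m-1) = 0^{t_m}` gives the factor
`00`, and since `φ(j 0) = 0^{t_{j+1}} (j+1) 0^{t₁} 1` the factors `j 0` climb up to `(m-1) 0`.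
As `u_β` starts with `0 ≠ m-1`, this occurrence ends a maximal run `x (m-1)^k 0` with `x ≠ m-1`,
whose image `0^{t_{x+1}} (x+1) 0^{k t_m + t₁} 1` contains both `(x+1) 0^N` and `0 0^N`.
Finally `u_β` begins with `0^{t₁} 1` and `t₁ < N`, so `0^N` is not a prefix. -/

open List

section Words

variable {A : Type*} {u : ℕ → A} {φ : A → List A}

@[simp]
theorem length_factorAt (u : ℕ → A) (i n : ℕ) : (factorAt u i n).length = n := by
  simp [factorAt]

@[simp]
theorem getElem_factorAt (u : ℕ → A) (i n j : ℕ) (hj : j < (factorAt u i n).length) :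
    (factorAt u i n)[j] = u (i + j) := by
  simp [factorAt]

theorem factorAt_add (u : ℕ → A) (i a b : ℕ) :
    factorAt u i (a + b) = factorAt u i a ++ factorAt u (i + a) b := by
  simp only [factorAt, range_add, map_append, map_map, Function.comp_def, Nat.add_assoc]

theorem factorAt_one (u : ℕ → A) (i : ℕ) : factorAt u i 1 = [u i] := by
  simp [factorAt]

theorem factorAt_eq_replicate {i n : ℕ} {c : A} (h : ∀ j < n, u (i + j) = c) :
    factorAt u i n = replicate n c :=
  eq_replicate_iff.2 ⟨length_factorAt u i n, by simpa [factorAt] using h⟩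

theorem apply_eq_getElem_of_factorAt_eq {i n j : ℕ} {w : List A} (h : factorAt u i n = w)
    (hj : j < w.length) : u (i + j) = w[j] := by
  subst h
  simp

theorem isFactor_factorAt (u : ℕ → A) (i n : ℕ) : IsFactor u (factorAt u i n) :=
  ⟨i, by rw [length_factorAt]⟩

theorem IsFactor.of_infix {w v : List A} (hw : IsFactor u w) (hv : v <:+: w) : IsFactor u v := by
  obtain ⟨i, hi⟩ := hw
  obtain ⟨s, r, rfl⟩ := hv
  rw [length_append, length_append, factorAt_add, factorAt_add] at hi
  obtain ⟨hsv, -⟩ := append_inj hi (by simp)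
  obtain ⟨-, hv⟩ := append_inj hsv (by simp)
  exact ⟨i + s.length, hv⟩

theorem IsFactor.cons_replicate_of_le {a c : A} {k l : ℕ} (h : IsFactor u (a :: replicate l c))
    (hkl : k ≤ l) : IsFactor u (a :: replicate k c) := by
  refine h.of_infix (IsPrefix.isInfix ⟨replicate (l - k) c, ?_⟩)
  rw [cons_append, ← replicate_add, Nat.add_sub_cancel' hkl]

theorem SubFixed.factorAt_length_apply_zero (hu : SubFixed u φ) :
    factorAt u 0 (φ (u 0)).length = φ (u 0) := by
  simpa [factorAt_one] using hu 1

theorem SubFixed.isFactor_flatMap (hu : SubFixed u φ) {w : List A} (hw : IsFactor u w) :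
    IsFactor u (w.flatMap φ) := by
  obtain ⟨i, hi⟩ := hw
  have hpre : factorAt u 0 (i + w.length) = factorAt u 0 i ++ w := by
    rw [factorAt_add, Nat.zero_add, ← hi]
  have himage := hu (i + w.length)
  rw [hpre, flatMap_append] at himage
  have hfac := isFactor_factorAt u 0 ((factorAt u 0 i).flatMap φ ++ w.flatMap φ).length
  rw [himage] at hfac
  exact hfac.of_infix (suffix_append _ _).isInfix

theorem IsFactor.exists_ne_cons_replicate {c d : A} (h : IsFactor u [c, d]) (h0 : u 0 ≠ c) :
    ∃ x k, x ≠ c ∧ IsFactor u (x :: replicate (k + 1) c ++ [d]) := by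
  classical
  obtain ⟨p, hp⟩ := h
  have hpc : u p = c := by simpa using apply_eq_getElem_of_factorAt_eq hp.symm (j := 0) (by simp)
  have hpd : u (p + 1) = d := by
    simpa using apply_eq_getElem_of_factorAt_eq hp.symm (j := 1) (by simp)
  set q := Nat.findGreatest (fun r => u r ≠ c) p
  have hqc : u q ≠ c := Nat.findGreatest_spec (P := fun r => u r ≠ c) (Nat.zero_le p) h0
  have hrun : ∀ r, q < r → r ≤ p → u r = c := fun r hqr hrp =>
    not_not.1 (Nat.findGreatest_is_greatest hqr hrp)
  have hqp : q < p := lt_of_le_of_ne (Nat.findGreatest_le p) (by rintro hqp; exact hqc (hqp ▸ hpc))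
  obtain ⟨k, hk⟩ := Nat.exists_eq_add_of_lt hqp
  refine ⟨u q, k, hqc, q, ?_⟩
  have hmid : factorAt u (q + 1) (k + 1) = replicate (k + 1) c :=
    factorAt_eq_replicate fun j hj => hrun _ (by omega) (by omega)
  rw [length_append, length_cons, length_replicate, length_singleton,
    show k + 1 + 1 + 1 = 1 + (k + 1) + 1 by ring, factorAt_add, factorAt_add, factorAt_one,
    factorAt_one, hmid, show q + (1 + (k + 1)) = p + 1 by omega, hpd]
  rfl

end Words

/-- The substitution `φ` of `u_β` on the alphabet `Fin m`, written for `m = n + 2`. -/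
def betaSubst (n : ℕ) (t : ℕ → ℕ) : Fin (n + 2) → List (Fin (n + 2)) :=
  Fin.lastCases (replicate (t (n + 2)) 0) fun i => replicate (t (i + 1)) 0 ++ [i.succ]

section

variable {n : ℕ} {t : ℕ → ℕ}

@[simp]
theorem betaSubst_castSucc (i : Fin (n + 1)) :
    betaSubst n t i.castSucc = replicate (t (i + 1)) 0 ++ [i.succ] :=
  Fin.lastCases_castSucc i

@[simp]
theorem betaSubst_last : betaSubst n t (Fin.last (n + 1)) = replicate (t (n + 2)) 0 :=
  Fin.lastCases_last

theorem betaSubst_zero : betaSubst n t 0 = replicate (t 1) 0 ++ [1] :=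
  betaSubst_castSucc 0

end

namespace BetaSubst

variable {n : ℕ} {t : ℕ → ℕ} {u : ℕ → Fin (n + 2)}

theorem apply_zero_eq_zero (hu : SubFixed u (betaSubst n t)) (htm : 1 ≤ t (n + 2)) :
    u 0 = 0 := by
  have hhead : ∀ hl : 0 < (betaSubst n t (u 0)).length, u 0 = (betaSubst n t (u 0))[0] :=
    fun hl => by simpa using apply_eq_getElem_of_factorAt_eq hu.factorAt_length_apply_zero hl
  rcases Fin.eq_castSucc_or_eq_last (u 0) with ⟨i, hi⟩ | hi
  · rw [hi] at hhead
    rcases Nat.eq_zero_or_pos (t (i + 1)) with ht | ht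
    · exact absurd (hhead (by simp)) (by simp [ht, Fin.castSucc_lt_succ.ne])
    · rw [hi]
      simpa [ht] using hhead (by simp)
  · rw [hi] at hhead
    simpa [hi] using hhead (by simp; omega)

theorem apply_t_one_eq_one (hu : SubFixed u (betaSubst n t)) (htm : 1 ≤ t (n + 2)) :
    u (t 1) = 1 := by
  have hpre := hu.factorAt_length_apply_zero
  rw [apply_zero_eq_zero hu htm, betaSubst_zero] at hpre
  simpa using apply_eq_getElem_of_factorAt_eq hpre (j := t 1) (by simp)

theorem isFactor_singleton (hu : SubFixed u (betaSubst n t)) (htm : 1 ≤ t (n + 2))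
    (a : Fin (n + 2)) : IsFactor u [a] := by
  induction a using Fin.induction with
  | zero => exact ⟨0, by simp [factorAt_one, apply_zero_eq_zero hu htm]⟩
  | succ i ih =>
    have himage := hu.isFactor_flatMap ih
    rw [flatMap_singleton, betaSubst_castSucc] at himage
    exact himage.of_infix (suffix_append _ _).isInfix

theorem isFactor_pair_zero (hu : SubFixed u (betaSubst n t)) (ht1 : 1 ≤ t 1)
    (htm : 2 ≤ t (n + 2)) (a : Fin (n + 2)) : IsFactor u [a, 0] := by
  induction a using Fin.induction with
  | zero =>
    have himage := hu.isFactor_flatMap (isFactor_singleton hu (by omega) (Fin.last (n + 1)))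
    rw [flatMap_singleton, betaSubst_last] at himage
    exact himage.of_infix (prefix_replicate_iff.2 ⟨by simpa, by simp⟩).isInfix
  | succ i ih =>
    have himage := hu.isFactor_flatMap ih
    obtain ⟨s, hs⟩ := Nat.exists_eq_add_of_le' ht1
    refine himage.of_infix ⟨replicate (t (i + 1)) 0, replicate s 0 ++ [1], ?_⟩
    simp [betaSubst_zero, hs, replicate_succ]

theorem isFactor_replicate_zero (hu : SubFixed u (betaSubst n t)) (ht1 : 1 ≤ t 1)
    (htm : 2 ≤ t (n + 2)) :
    IsFactor u (0 :: replicate (t 1 + t (n + 2) - 1) 0) := by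
  have himage := hu.isFactor_flatMap (isFactor_pair_zero hu ht1 htm (Fin.last (n + 1)))
  refine himage.of_infix (IsPrefix.isInfix ⟨[1], ?_⟩)
  rw [← replicate_succ, show t 1 + t (n + 2) - 1 + 1 = t (n + 2) + t 1 by omega, replicate_add]
  simp [betaSubst_zero, ← append_assoc]

theorem exists_isFactor_succ_cons_replicate_zero (hu : SubFixed u (betaSubst n t))
    (ht1 : 1 ≤ t 1) (htm : 2 ≤ t (n + 2)) :
    ∃ i : Fin (n + 1), IsFactor u (i.succ :: replicate (t 1 + t (n + 2) - 1) 0) := by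
  have hu0 : u 0 ≠ Fin.last (n + 1) := by
    rw [apply_zero_eq_zero hu (by omega)]
    exact (Fin.last_pos).ne
  obtain ⟨x, k, hx, hrun⟩ :=
    (isFactor_pair_zero hu ht1 htm (Fin.last (n + 1))).exists_ne_cons_replicate hu0
  obtain ⟨i, rfl⟩ := Fin.exists_castSucc_eq.2 hx
  have himage : IsFactor u (i.succ :: replicate ((k + 1) * t (n + 2) + t 1) 0) :=
    (hu.isFactor_flatMap hrun).of_infix ⟨replicate (t (i + 1)) 0, [1], by
      simp [betaSubst_zero, flatMap_replicate, -replicate_append_replicate, replicate_add, add_mul]⟩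
  have hlong := Nat.le_mul_of_pos_left (t (n + 2)) (by omega : 0 < k + 1)
  exact ⟨i, himage.cons_replicate_of_le (by omega)⟩

end BetaSubst

open BetaSubst in
/-- If `t_m ≥ 2`, the word `0^{t_1+t_m−1}` is a left special factor of `u_β`
that is not a prefix of `u_β`. -/
theorem stmt_10 (m : ℕ) (hm : 2 ≤ m) (t : ℕ → ℕ)
    (ht1 : 1 ≤ t 1) (htm : 2 ≤ t m)
    (φ : Fin m → List (Fin m))
    (hφ : ∀ i : Fin m, φ i =
      if h : (i : ℕ) + 1 < m then
        List.replicate (t ((i : ℕ) + 1)) (⟨0, by omega⟩ : Fin m) ++ [(⟨(i : ℕ) + 1, h⟩ : Fin m)]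
      else
        List.replicate (t m) (⟨0, by omega⟩ : Fin m))
    (u : ℕ → Fin m) (hu : SubFixed u φ) :
    (∃ a b : Fin m, a ≠ b ∧
        IsFactor u (a :: List.replicate (t 1 + t m - 1) (⟨0, by omega⟩ : Fin m)) ∧
        IsFactor u (b :: List.replicate (t 1 + t m - 1) (⟨0, by omega⟩ : Fin m))) ∧
    List.replicate (t 1 + t m - 1) (⟨0, by omega⟩ : Fin m) ≠ factorAt u 0 (t 1 + t m - 1) := by
  obtain ⟨n, rfl⟩ : ∃ n, m = n + 2 := ⟨m - 2, by omega⟩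
  obtain rfl : φ = betaSubst n t := funext fun i => by
    induction i using Fin.lastCases with
    | last => simp [hφ]
    | cast i => rw [hφ, dif_pos (by simp [i.is_le]), betaSubst_castSucc]; rfl
  obtain ⟨i, hi⟩ := exists_isFactor_succ_cons_replicate_zero hu ht1 htm
  refine ⟨⟨i.succ, 0, i.succ_ne_zero, hi, isFactor_replicate_zero hu ht1 htm⟩, fun hpre => ?_⟩
  have hletter := apply_eq_getElem_of_factorAt_eq hpre.symm (j := t 1) (by simp; omega)
  simp [apply_t_one_eq_one hu (by omega)] at hletter
end

section
/- Let β > 1 and let y be a nonnegative β-integer with β-expansion y_n y_{n−1} ⋯ y_k 0^k (so y_k ≠ 0 and the last k digits are zero), where β is a simple Parry number with d_β(1) = t_1⋯t_m. Then the distance from y to its predecessor in ℤ_β is y − pred(y) = T_β^{k'}(1), where k' ∈ {0,...,m−1} satisfies k' ≡ k (mod m). -/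
/-!
The predecessor of `y` is obtained by lowering its lowest nonzero digit `y_k` by one and filling
the `k` positions below it with the beginning of the quasi-greedy expansion `d*_β(1)`. This word
is still admissible because every factor of `d*_β(1)` is smaller than `d_β(1)`, and since
`d*_β(1)` is periodic with period `m` its value is `y - β^k + (β^k - T_β^{k mod m}(1))`.
Conversely, the largest admissible word of length `n` has value `β^n - T_β^{n mod m}(1)`, so
comparing an admissible `p < y` with `y` at their highest differing digit shows
`p ≤ y - T_β^{k mod m}(1)`.
-/

open Finset

theorem List.lex_lt_iff_exists_getD {l₁ l₂ : List ℕ} :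
    List.Lex (· < ·) l₁ l₂ ↔ ∃ s < l₂.length,
      (∀ j < s, j < l₁.length → l₁.getD j 0 = l₂.getD j 0) ∧
        (s < l₁.length → l₁.getD s 0 < l₂.getD s 0) := by
  rw [List.lex_lt, List.lt_iff_exists]
  constructor
  · rintro (⟨hpre, hlen⟩ | ⟨s, h₁, h₂, heq, hlt⟩)
    · refine ⟨l₁.length, hlen, fun j _ hj => ?_, fun h => absurd h (lt_irrefl _)⟩
      rw [List.getD_eq_getElem _ _ hj, List.getD_eq_getElem _ _ (hj.trans hlen)]
      simp_rw [List.getElem_of_eq hpre hj, List.getElem_take]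
    · refine ⟨s, h₂, fun j hj _ => ?_, fun _ => ?_⟩
      · rw [List.getD_eq_getElem _ _ (hj.trans h₁), List.getD_eq_getElem _ _ (hj.trans h₂)]
        exact heq j hj
      · rwa [List.getD_eq_getElem _ _ h₁, List.getD_eq_getElem _ _ h₂]
  · rintro ⟨s, hs, heq, hlt⟩
    by_cases h₁ : s < l₁.length
    · refine Or.inr ⟨s, h₁, hs, fun j hj => ?_, ?_⟩
      · have := heq j hj (hj.trans h₁)
        rwa [List.getD_eq_getElem _ _ (hj.trans h₁),
          List.getD_eq_getElem _ _ (hj.trans hs)] at this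
      · have := hlt h₁
        rwa [List.getD_eq_getElem _ _ h₁, List.getD_eq_getElem _ _ hs] at this
    · refine Or.inl ⟨List.ext_getElem (by rw [List.length_take]; omega) fun j hj₁ hj₂ => ?_,
        by omega⟩
      have := heq j (by omega) hj₁
      rw [List.getD_eq_getElem _ _ hj₁, List.getD_eq_getElem _ _ (by omega)] at this
      rw [this, List.getElem_take]

theorem List.getD_reverse_take {L : List ℕ} {i j : ℕ} (hi : i < L.length) (hj : j ≤ i) :
    ((L.take (i + 1)).reverse).getD j 0 = L.getD (i - j) 0 := by
  have hlen : (L.take (i + 1)).length = i + 1 := by rw [List.length_take]; omega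
  rw [List.getD_reverse _ (by omega), List.getD_eq_getElem _ _ (by omega),
    List.getD_eq_getElem _ _ (by omega), List.getElem_take]
  congr 1
  omega

theorem List.getD_map_range {f : ℕ → ℕ} {n j : ℕ} (hj : j < n) :
    ((List.range n).map f).getD j 0 = f j := by
  rw [List.getD_eq_getElem _ _ (by simpa using hj)]
  simp

/-- The word `a i, a (i - 1), …, a 0` is lexicographically smaller than `t 1, …, t m`. -/
def WordLexLT (t : ℕ → ℕ) (m : ℕ) (a : ℕ → ℕ) (i : ℕ) : Prop :=
  ∃ s < m, (∀ j < s, j ≤ i → a (i - j) = t (j + 1)) ∧ (s ≤ i → a (i - s) < t (s + 1))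

def IsAdmissible (t : ℕ → ℕ) (m : ℕ) (a : ℕ → ℕ) : Prop :=
  ∀ i, WordLexLT t m a i

section Words

variable {t : ℕ → ℕ} {m : ℕ}

theorem lex_reverse_take_iff_wordLexLT {L : List ℕ} {i : ℕ} (hi : i < L.length) :
    List.Lex (· < ·) ((L.take (i + 1)).reverse) ((List.range m).map fun j => t (j + 1)) ↔
      WordLexLT t m (fun j => L.getD j 0) i := by
  have hlen : ((L.take (i + 1)).reverse).length = i + 1 := by
    rw [List.length_reverse, List.length_take]; omega
  simp only [List.lex_lt_iff_exists_getD, hlen, List.length_map, List.length_range]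
  refine exists_congr fun s => and_congr_right fun hs => and_congr ?_ ?_
  · refine forall₂_congr fun j hj => ?_
    rw [Nat.lt_succ_iff]
    refine imp_congr_right fun hji => ?_
    rw [List.getD_reverse_take hi hji, List.getD_map_range (hj.trans hs)]
  · rw [Nat.lt_succ_iff]
    refine imp_congr_right fun hsi => ?_
    rw [List.getD_reverse_take hi hsi, List.getD_map_range hs]

theorem isAdmissible_getD (hm : 0 < m) (ht : 0 < t 1) {L : List ℕ}
    (hL : ∀ i, i < L.length →
      List.Lex (· < ·) ((L.take (i + 1)).reverse) ((List.range m).map fun j => t (j + 1))) :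
    IsAdmissible t m (fun j => L.getD j 0) := by
  intro i
  rcases lt_or_ge i L.length with hi | hi
  · exact (lex_reverse_take_iff_wordLexLT hi).1 (hL i hi)
  · refine ⟨0, hm, fun j hj => absurd hj (Nat.not_lt_zero j), fun _ => ?_⟩
    show L.getD (i - 0) 0 < t (0 + 1)
    rwa [Nat.sub_zero, List.getD_eq_default _ _ hi]

theorem exists_list_of_isAdmissible {β : ℝ} {a : ℕ → ℕ} (ha : IsAdmissible t m a) {n : ℕ}
    (hzero : ∀ j, n ≤ j → a j = 0) :
    ∃ L : List ℕ, (∀ i, i < L.length →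
        List.Lex (· < ·) ((L.take (i + 1)).reverse) ((List.range m).map fun j => t (j + 1))) ∧
      ∑ i ∈ range L.length, (L.getD i 0 : ℝ) * β ^ i =
        ∑ i ∈ range n, (a i : ℝ) * β ^ i := by
  have hget : (fun j => ((List.range n).map a).getD j 0) = a := by
    ext j
    rcases lt_or_ge j n with hj | hj
    · exact List.getD_map_range hj
    · rw [List.getD_eq_default _ _ (by simpa using hj), hzero j hj]
  refine ⟨(List.range n).map a, fun i hi => ?_, ?_⟩
  · rw [lex_reverse_take_iff_wordLexLT hi, hget]
    exact ha i
  · simp_rw [List.length_map, List.length_range]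
    exact sum_congr rfl fun i _ => by rw [congrFun hget i]

theorem WordLexLT.of_lt {a b : ℕ → ℕ} {i k : ℕ} (h : WordLexLT t m a i) (hki : k ≤ i)
    (hk : b k < a k) (habove : ∀ j, k < j → j ≤ i → b j = a j) : WordLexLT t m b i := by
  obtain ⟨s, hsm, hagree, hdrop⟩ := h
  have hki' : i - (i - k) = k := by omega
  refine ⟨min s (i - k), lt_of_le_of_lt (min_le_left _ _) hsm, fun j hj hji => ?_, fun _ => ?_⟩
  · rw [habove _ (by omega) (by omega)]
    exact hagree j (lt_of_lt_of_le hj (min_le_left _ _)) hji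
  · rcases lt_or_ge (i - k) s with hs | hs
    · rw [min_eq_right hs.le, hki', ← hagree _ hs (by omega), hki']
      exact hk
    · rw [min_eq_left hs]
      have := hdrop (by omega)
      rcases eq_or_lt_of_le hs with rfl | hs'
      · rw [hki'] at this ⊢; omega
      · rw [habove _ (by omega) (by omega)]; exact this

end Words

theorem sum_mul_pow_eq_pow_sub {β : ℝ} {x d : ℕ → ℝ} (h0 : x 0 = 1)
    (hd : ∀ j, d (j + 1) = β * x j - x (j + 1)) (n : ℕ) :
    ∑ i ∈ range n, d (n - i) * β ^ i = β ^ n - x n := by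
  induction n with
  | zero => simp [h0]
  | succ n ih =>
    rw [sum_range_succ']
    simp_rw [Nat.add_sub_add_right, pow_succ, ← mul_assoc, ← sum_mul, ih, Nat.sub_zero, hd]
    ring

theorem sum_getD_mul_pow_of_length_le (β : ℝ) (L : List ℕ) {N : ℕ} (hN : L.length ≤ N) :
    ∑ i ∈ range N, (L.getD i 0 : ℝ) * β ^ i =
      ∑ i ∈ range L.length, (L.getD i 0 : ℝ) * β ^ i :=
  (sum_subset (range_subset_range.2 hN) fun i _ hi => by
    rw [List.getD_eq_default _ _ (by simpa using hi), Nat.cast_zero, zero_mul]).symm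

noncomputable def betaOrbit (β : ℝ) (j : ℕ) : ℝ := (fun x : ℝ => Int.fract (β * x))^[j] 1

theorem betaOrbit_zero (β : ℝ) : betaOrbit β 0 = 1 := rfl

theorem betaOrbit_succ (β : ℝ) (j : ℕ) :
    betaOrbit β (j + 1) = Int.fract (β * betaOrbit β j) :=
  Function.iterate_succ_apply' _ _ _

theorem betaOrbit_nonneg (β : ℝ) (j : ℕ) : 0 ≤ betaOrbit β j := by
  cases j with
  | zero => exact zero_le_one
  | succ j => exact betaOrbit_succ β j ▸ Int.fract_nonneg _

theorem betaOrbit_le_one (β : ℝ) (j : ℕ) : betaOrbit β j ≤ 1 := by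
  cases j with
  | zero => exact le_rfl
  | succ j => exact betaOrbit_succ β j ▸ (Int.fract_lt_one _).le

theorem Nat.add_mod_eq_add_of_mod_add_lt {a j m : ℕ} (h : a % m + j < m) :
    (a + j) % m = a % m + j := by
  rw [← Nat.mod_add_mod, Nat.mod_eq_of_lt h]

/-- The digits of the quasi-greedy expansion `d*_β(1) = (t 1 ⋯ t (m-1) (t m - 1))^ω`,
indexed from `0`. -/
def quasiGreedyDigit (t : ℕ → ℕ) (m n : ℕ) : ℕ :=
  if n % m = m - 1 then t m - 1 else t (n % m + 1)

section QuasiGreedy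

variable {t : ℕ → ℕ} {m : ℕ}

theorem quasiGreedyDigit_add_of_lt {a j : ℕ} (h : a % m + j < m - 1) :
    quasiGreedyDigit t m (a + j) = t (a % m + j + 1) := by
  rw [quasiGreedyDigit, Nat.add_mod_eq_add_of_mod_add_lt (by omega), if_neg (by omega)]

theorem quasiGreedyDigit_add_of_eq (hm : 0 < m) {a j : ℕ} (h : a % m + j = m - 1) :
    quasiGreedyDigit t m (a + j) = t m - 1 := by
  rw [quasiGreedyDigit, Nat.add_mod_eq_add_of_mod_add_lt (by omega), if_pos h]

end QuasiGreedy

/-- The digits of `pred (∑ a_j β^j)` when `a` vanishes below `k` and `a k ≠ 0`. -/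
def predDigits (t : ℕ → ℕ) (m : ℕ) (a : ℕ → ℕ) (k j : ℕ) : ℕ :=
  if j < k then quasiGreedyDigit t m (k - 1 - j) else if j = k then a k - 1 else a j

/-- `d_β(1) = t 1 ⋯ t m` is a finite Rényi expansion of `1`. -/
structure IsRenyiExpansion (β : ℝ) (t : ℕ → ℕ) (m : ℕ) : Prop where
  one_lt : 1 < β
  betaOrbit_pos : ∀ i < m, 0 < betaOrbit β i
  betaOrbit_length : betaOrbit β m = 0
  digit_eq_floor : ∀ i, (t (i + 1) : ℤ) = ⌊β * betaOrbit β i⌋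

namespace IsRenyiExpansion

variable {β : ℝ} {t : ℕ → ℕ} {m : ℕ} (h : IsRenyiExpansion β t m)
include h

theorem length_pos : 0 < m :=
  Nat.pos_of_ne_zero fun hm => by simpa [hm, betaOrbit_zero] using h.betaOrbit_length

theorem betaOrbit_succ_eq (j : ℕ) : betaOrbit β (j + 1) = β * betaOrbit β j - t (j + 1) := by
  rw [betaOrbit_succ, Int.fract, ← h.digit_eq_floor, Int.cast_natCast]

theorem sum_digit_mul_pow (n : ℕ) :
    ∑ i ∈ range n, (t (n - i) : ℝ) * β ^ i = β ^ n - betaOrbit β n :=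
  sum_mul_pow_eq_pow_sub (d := fun j => (t j : ℝ)) (betaOrbit_zero β)
    (fun j => by rw [h.betaOrbit_succ_eq]; ring) n

theorem digit_one_pos : 0 < t 1 := by
  have := h.digit_eq_floor 0
  rw [betaOrbit_zero, mul_one] at this
  have : (1 : ℤ) ≤ t 1 := this ▸ Int.le_floor.2 (by exact_mod_cast h.one_lt.le)
  omega

theorem digit_length_pos : 0 < t m := by
  have hm := h.length_pos
  have hrec := h.betaOrbit_succ_eq (m - 1)
  rw [Nat.sub_add_cancel hm, h.betaOrbit_length] at hrec
  have : 0 < β * betaOrbit β (m - 1) :=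
    mul_pos (by linarith [h.one_lt]) (h.betaOrbit_pos _ (by omega))
  exact_mod_cast (show (0 : ℝ) < t m by linarith)

theorem betaOrbit_mod_le_pow_mul (a : ℕ) {r : ℕ} (hr : r < m) :
    betaOrbit β ((r + a) % m) ≤ β ^ a * betaOrbit β r := by
  induction a generalizing r with
  | zero => simp [Nat.mod_eq_of_lt hr]
  | succ a ih =>
    have hrec := h.betaOrbit_succ_eq r
    have hβa : 1 ≤ β ^ a := one_le_pow₀ h.one_lt.le
    rcases lt_or_ge (r + 1) m with hr1 | hr1
    · calc betaOrbit β ((r + (a + 1)) % m) = betaOrbit β ((r + 1 + a) % m) := by ring_nf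
        _ ≤ β ^ a * betaOrbit β (r + 1) := ih hr1
        _ ≤ β ^ a * (β * betaOrbit β r) := by
          gcongr; linarith [(Nat.cast_nonneg (t (r + 1)) : (0 : ℝ) ≤ _)]
        _ = β ^ (a + 1) * betaOrbit β r := by ring
    · obtain rfl : m = r + 1 := by omega
      have htm : (1 : ℝ) ≤ t (r + 1) := by exact_mod_cast h.digit_length_pos
      rw [h.betaOrbit_length] at hrec
      have htr : (t (r + 1) : ℝ) = β * betaOrbit β r := by linarith
      calc betaOrbit β ((r + (a + 1)) % (r + 1)) ≤ 1 := betaOrbit_le_one β _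
        _ ≤ β ^ a * t (r + 1) := by nlinarith
        _ = β ^ (a + 1) * betaOrbit β r := by rw [htr, pow_succ, mul_assoc]

theorem betaOrbit_add_le_of_digits_eq {r l : ℕ} (heq : ∀ j < l, t (r + j + 1) = t (j + 1)) :
    betaOrbit β (r + l) ≤ betaOrbit β l := by
  induction l with
  | zero => exact betaOrbit_le_one β r
  | succ l ih =>
    rw [← add_assoc, h.betaOrbit_succ_eq, h.betaOrbit_succ_eq, heq l (Nat.lt_succ_self l)]
    have := ih fun j hj => heq j (hj.trans (Nat.lt_succ_self l))
    gcongr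
    linarith [h.one_lt]

/-- Parry's condition: no shift of `d_β(1)` exceeds it. -/
theorem digit_add_le_of_digits_eq {r l : ℕ} (heq : ∀ j < l, t (r + j + 1) = t (j + 1)) :
    t (r + l + 1) ≤ t (l + 1) := by
  have : (t (r + l + 1) : ℤ) ≤ t (l + 1) := by
    rw [h.digit_eq_floor, h.digit_eq_floor]
    exact Int.floor_mono <|
      mul_le_mul_of_nonneg_left (h.betaOrbit_add_le_of_digits_eq heq) (by linarith [h.one_lt])
  exact_mod_cast this

theorem quasiGreedyDigit_eq (n : ℕ) :
    (quasiGreedyDigit t m n : ℝ) = β * betaOrbit β (n % m) - betaOrbit β ((n + 1) % m) := by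
  have hm := h.length_pos
  have hlt := Nat.mod_lt n hm
  rw [← Nat.mod_add_mod n m 1, quasiGreedyDigit]
  split_ifs with hn
  · have hrec := h.betaOrbit_succ_eq (m - 1)
    rw [Nat.sub_add_cancel hm, h.betaOrbit_length] at hrec
    rw [hn, Nat.sub_add_cancel hm, Nat.mod_self, betaOrbit_zero,
      Nat.cast_sub h.digit_length_pos, Nat.cast_one]
    linarith
  · rw [Nat.mod_eq_of_lt (show n % m + 1 < m by omega), h.betaOrbit_succ_eq]
    ring

theorem sum_quasiGreedyDigit (n : ℕ) :
    ∑ i ∈ range n, (quasiGreedyDigit t m (n - 1 - i) : ℝ) * β ^ i =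
      β ^ n - betaOrbit β (n % m) :=
  calc ∑ i ∈ range n, (quasiGreedyDigit t m (n - 1 - i) : ℝ) * β ^ i
      = ∑ i ∈ range n, (quasiGreedyDigit t m (n - i - 1) : ℝ) * β ^ i := by
        simp_rw [Nat.sub_right_comm n 1]
    _ = β ^ n - betaOrbit β (n % m) :=
        sum_mul_pow_eq_pow_sub (x := fun j => betaOrbit β (j % m))
          (d := fun j => (quasiGreedyDigit t m (j - 1) : ℝ))
          (by simp [betaOrbit_zero]) (fun j => by simpa using h.quasiGreedyDigit_eq j) n

/-- Every factor of `d*_β(1)` is lexicographically smaller than `d_β(1)`. -/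
theorem exists_quasiGreedyDigit_lt (a : ℕ) :
    ∃ p < m, (∀ j < p, quasiGreedyDigit t m (a + j) = t (j + 1)) ∧
      quasiGreedyDigit t m (a + p) < t (p + 1) := by
  classical
  have hm := h.length_pos
  have hr : a % m < m := Nat.mod_lt a hm
  have hP : ∃ p, p = m - 1 - a % m ∨ quasiGreedyDigit t m (a + p) ≠ t (p + 1) :=
    ⟨_, Or.inl rfl⟩
  have hp_le : Nat.find hP ≤ m - 1 - a % m := Nat.find_min' hP (Or.inl rfl)
  have hagree : ∀ j < Nat.find hP, quasiGreedyDigit t m (a + j) = t (j + 1) := fun j hj => by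
    simpa using (not_or.1 (Nat.find_min hP hj)).2
  have hle : t (a % m + Nat.find hP + 1) ≤ t (Nat.find hP + 1) :=
    h.digit_add_le_of_digits_eq fun j hj =>
      (quasiGreedyDigit_add_of_lt (by omega)).symm.trans (hagree j hj)
  refine ⟨Nat.find hP, by omega, hagree, ?_⟩
  rcases eq_or_lt_of_le hp_le with hp | hp
  · have htm := h.digit_length_pos
    rw [quasiGreedyDigit_add_of_eq hm (by omega)]
    rw [show a % m + Nat.find hP + 1 = m by omega] at hle
    omega
  · have hne := (Nat.find_spec hP).resolve_left hp.ne
    rw [quasiGreedyDigit_add_of_lt (by omega)] at hne ⊢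
    omega

theorem betaOrbit_mod_le {r : ℕ} (hr : r ≤ m) (d : ℕ) :
    betaOrbit β ((r + d) % m) ≤ β ^ d * betaOrbit β r + betaOrbit β (d % m) := by
  rcases eq_or_lt_of_le hr with rfl | hr
  · rw [Nat.add_mod_left, h.betaOrbit_length, mul_zero, zero_add]
  · linarith [h.betaOrbit_mod_le_pow_mul d hr, betaOrbit_nonneg β (d % m)]

/-- The largest admissible word of length `n` is the prefix of length `n` of `d*_β(1)`. -/
theorem sum_le_of_isAdmissible {b : ℕ → ℕ} (hb : IsAdmissible t m b) (n : ℕ) :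
    ∑ i ∈ range n, (b i : ℝ) * β ^ i ≤ β ^ n - betaOrbit β (n % m) := by
  induction n using Nat.strong_induction_on with
  | _ n ih =>
  rcases n with _ | i
  · simp [betaOrbit_zero]
  obtain ⟨s, hsm, hagree, hdrop⟩ := hb i
  rcases lt_or_ge i s with his | hsi
  · -- `b i ⋯ b 0` is a proper prefix of `t 1 ⋯ t m`
    have hdigits : ∀ l ∈ range (i + 1), (b l : ℝ) * β ^ l = t (i + 1 - l) * β ^ l := by
      intro l hl
      rw [mem_range] at hl
      have := hagree (i - l) (by omega) (by omega)
      rw [Nat.sub_sub_self (by omega), show i - l + 1 = i + 1 - l by omega] at this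
      rw [this]
    rw [sum_congr rfl hdigits, h.sum_digit_mul_pow, Nat.mod_eq_of_lt (by omega)]
  -- `b i ⋯ b 0` starts with `t 1 ⋯ t s` followed by `b d < t (s + 1)`
  obtain ⟨d, rfl⟩ : ∃ d, i = d + s := ⟨i - s, by omega⟩
  have htop : ∑ q ∈ range s, (b (d + 1 + q) : ℝ) * β ^ (d + 1 + q) =
      β ^ (d + 1) * (β ^ s - betaOrbit β s) := by
    rw [← h.sum_digit_mul_pow, mul_sum]
    refine sum_congr rfl fun q hq => ?_
    rw [mem_range] at hq
    have := hagree (s - 1 - q) (by omega) (by omega)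
    rw [show d + s - (s - 1 - q) = d + 1 + q by omega, show s - 1 - q + 1 = s - q by omega] at this
    rw [this, pow_add]
    ring
  have hmid : (b d : ℝ) * β ^ d ≤ (t (s + 1) - 1) * β ^ d := by
    have := hdrop (by omega)
    rw [Nat.add_sub_cancel] at this
    have : (b d : ℝ) + 1 ≤ t (s + 1) := by exact_mod_cast this
    exact mul_le_mul_of_nonneg_right (by linarith) (pow_nonneg (by linarith [h.one_lt]) d)
  have hlow := ih d (by omega)
  have hrest := h.betaOrbit_mod_le (r := s + 1) (by omega) d
  have hrec :
      β ^ d * betaOrbit β (s + 1) = β ^ (d + 1) * betaOrbit β s - β ^ d * t (s + 1) := by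
    rw [h.betaOrbit_succ_eq, pow_succ]; ring
  have hpow : β ^ (d + 1 + s) = β ^ (d + 1) * β ^ s := pow_add β (d + 1) s
  rw [show d + s + 1 = d + 1 + s by omega, sum_range_add, sum_range_succ, htop]
  rw [show s + 1 + d = d + 1 + s by omega] at hrest
  linarith

theorem isAdmissible_predDigits {a : ℕ → ℕ} (ha : IsAdmissible t m a) {k : ℕ}
    (hk : a k ≠ 0) :
    IsAdmissible t m (predDigits t m a k) := by
  intro i
  rcases lt_or_ge i k with hik | hki
  · obtain ⟨p, hpm, hagree, hlt⟩ := h.exists_quasiGreedyDigit_lt (k - 1 - i)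
    have hq : ∀ j ≤ i, predDigits t m a k (i - j) = quasiGreedyDigit t m (k - 1 - i + j) :=
      fun j hj => by
        rw [predDigits, if_pos (by omega), show k - 1 - (i - j) = k - 1 - i + j by omega]
    exact ⟨p, hpm, fun j hj hji => (hq j hji).trans (hagree j hj),
      fun hpi => (hq p hpi).symm ▸ hlt⟩
  · refine (ha i).of_lt hki ?_ fun j hkj _ => ?_
    · rw [predDigits, if_neg (lt_irrefl k), if_pos rfl]; omega
    · rw [predDigits, if_neg (by omega), if_neg (by omega)]

theorem sum_predDigits {a : ℕ → ℕ} {k n : ℕ} (hlow : ∀ i < k, a i = 0) (hk : a k ≠ 0)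
    (hkn : k < n) :
    ∑ j ∈ range n, (predDigits t m a k j : ℝ) * β ^ j =
      ∑ j ∈ range n, (a j : ℝ) * β ^ j - betaOrbit β (k % m) := by
  obtain ⟨r, rfl⟩ : ∃ r, n = k + 1 + r := ⟨n - (k + 1), by omega⟩
  have hbelow :
      ∑ j ∈ range k, (predDigits t m a k j : ℝ) * β ^ j = β ^ k - betaOrbit β (k % m) := by
    rw [← h.sum_quasiGreedyDigit]
    exact sum_congr rfl fun j hj => by rw [predDigits, if_pos (mem_range.1 hj)]
  have hzero : ∑ j ∈ range k, (a j : ℝ) * β ^ j = 0 :=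
    sum_eq_zero fun j hj => by rw [hlow j (mem_range.1 hj), Nat.cast_zero, zero_mul]
  have hdigit : (predDigits t m a k k : ℝ) = a k - 1 := by
    rw [predDigits, if_neg (lt_irrefl k), if_pos rfl, Nat.cast_sub (by omega), Nat.cast_one]
  have habove : ∀ l ∈ range r, (predDigits t m a k (k + 1 + l) : ℝ) * β ^ (k + 1 + l) =
      (a (k + 1 + l) : ℝ) * β ^ (k + 1 + l) :=
    fun l _ => by rw [predDigits, if_neg (by omega), if_neg (by omega)]
  rw [sum_range_add, sum_range_succ, sum_range_add (fun j => (a j : ℝ) * β ^ j),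
    sum_range_succ (fun j => (a j : ℝ) * β ^ j), hbelow, hzero, hdigit, sum_congr rfl habove]
  ring

theorem betaOrbit_mod_le_sum_add {a : ℕ → ℕ} {k N : ℕ} (hlow : ∀ i < k, a i = 0)
    (hk : a k ≠ 0) (hkN : k ≤ N) :
    betaOrbit β (k % m) ≤ ∑ i ∈ range N, (a i : ℝ) * β ^ i + betaOrbit β (N % m) := by
  rcases eq_or_lt_of_le hkN with rfl | hkN
  · rw [sum_eq_zero fun i hi => by rw [hlow i (mem_range.1 hi), Nat.cast_zero, zero_mul],
      zero_add]
  · have hak : (1 : ℝ) ≤ a k := by exact_mod_cast Nat.one_le_iff_ne_zero.2 hk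
    have hpow : (1 : ℝ) ≤ β ^ k := one_le_pow₀ h.one_lt.le
    calc betaOrbit β (k % m) ≤ 1 := betaOrbit_le_one β _
      _ ≤ (a k : ℝ) * β ^ k := by nlinarith
      _ ≤ ∑ i ∈ range N, (a i : ℝ) * β ^ i :=
        single_le_sum (f := fun i => (a i : ℝ) * β ^ i)
          (fun i _ => mul_nonneg (Nat.cast_nonneg _) (pow_nonneg (by linarith [h.one_lt]) i))
          (mem_range.2 hkN)
      _ ≤ _ := le_add_of_nonneg_right (betaOrbit_nonneg β _)

theorem sum_le_sub_of_sum_lt {a b : ℕ → ℕ} (ha : IsAdmissible t m a) (hb : IsAdmissible t m b)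
    {k : ℕ} (hlow : ∀ i < k, a i = 0) (hk : a k ≠ 0) (N : ℕ)
    (hlt : ∑ i ∈ range N, (b i : ℝ) * β ^ i < ∑ i ∈ range N, (a i : ℝ) * β ^ i) :
    ∑ i ∈ range N, (b i : ℝ) * β ^ i ≤
      ∑ i ∈ range N, (a i : ℝ) * β ^ i - betaOrbit β (k % m) := by
  induction N with
  | zero => simp at hlt
  | succ N ih =>
    rw [sum_range_succ, sum_range_succ] at hlt ⊢
    have hbN := h.sum_le_of_isAdmissible hb N
    have haN := h.sum_le_of_isAdmissible ha N
    have hb0 : 0 ≤ ∑ i ∈ range N, (b i : ℝ) * β ^ i :=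
      sum_nonneg fun i _ => mul_nonneg (Nat.cast_nonneg _) (pow_nonneg (by linarith [h.one_lt]) i)
    rcases lt_trichotomy (b N) (a N) with hN | hN | hN
    · have hkN : k ≤ N := by
        by_contra! hNk
        rw [hlow N hNk] at hN
        omega
      have hdig : (b N : ℝ) + 1 ≤ a N := by exact_mod_cast hN
      have := h.betaOrbit_mod_le_sum_add hlow hk hkN
      nlinarith [betaOrbit_nonneg β (N % m)]
    · rw [hN] at hlt ⊢
      linarith [ih (by linarith)]
    · have hdig : (a N : ℝ) + 1 ≤ b N := by exact_mod_cast hN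
      nlinarith [betaOrbit_nonneg β (N % m)]

end IsRenyiExpansion

theorem stmt_16_general (β : ℝ) (hβ : 1 < β) (m : ℕ) (t : ℕ → ℕ)
    (hT0 : ∀ i : ℕ, i < m → 0 < (fun x : ℝ => Int.fract (β * x))^[i] 1)
    (hTm : (fun x : ℝ => Int.fract (β * x))^[m] 1 = 0)
    (ht : ∀ i : ℕ, (t (i + 1) : ℤ) = ⌊β * (fun x : ℝ => Int.fract (β * x))^[i] 1⌋)
    (Z : Set ℝ)
    (hZ : Z = {x : ℝ | ∃ L : List ℕ,
        (∀ i, i < L.length →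
          List.Lex (· < ·) ((L.take (i + 1)).reverse) ((List.range m).map fun j => t (j + 1))) ∧
        x = ∑ i ∈ Finset.range L.length, (L.getD i 0 : ℝ) * β ^ i})
    (y : ℝ) (L : List ℕ) (k : ℕ)
    (hLadm : ∀ i, i < L.length →
        List.Lex (· < ·) ((L.take (i + 1)).reverse) ((List.range m).map fun j => t (j + 1)))
    (hy : y = ∑ i ∈ Finset.range L.length, (L.getD i 0 : ℝ) * β ^ i)
    (hk : k < L.length) (hk0 : L.getD k 0 ≠ 0) (hlow : ∀ i, i < k → L.getD i 0 = 0)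
    (p : ℝ) (hpZ : p ∈ Z) (hpy : p < y) (hpred : ∀ z ∈ Z, z < y → z ≤ p) :
    y - p = (fun x : ℝ => Int.fract (β * x))^[k % m] 1 := by
  have h : IsRenyiExpansion β t m := ⟨hβ, hT0, hTm, ht⟩
  have ha := isAdmissible_getD h.length_pos h.digit_one_pos hLadm
  subst hZ hy
  obtain ⟨Q, hQadm, hQval⟩ := exists_list_of_isAdmissible (β := β)
    (h.isAdmissible_predDigits ha hk0) (n := L.length) fun j hj => by
      rw [predDigits, if_neg (by omega), if_neg (by omega), List.getD_eq_default _ _ hj]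
  have hge : _ ≤ p := hpred _ ⟨Q, hQadm, by rw [hQval, h.sum_predDigits hlow hk0 hk]⟩
    (sub_lt_self _ (h.betaOrbit_pos _ (Nat.mod_lt k h.length_pos)))
  obtain ⟨M, hMadm, rfl⟩ := hpZ
  have hle := h.sum_le_sub_of_sum_lt ha (isAdmissible_getD h.length_pos h.digit_one_pos hMadm)
    hlow hk0 (max M.length L.length)
  rw [sum_getD_mul_pow_of_length_le β M (le_max_left _ _),
    sum_getD_mul_pow_of_length_le β L (le_max_right _ _)] at hle
  have := hle hpy
  change _ = betaOrbit β (k % m)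
  linarith

/-- For a simple Parry number `β` with `d_β(1) = t_1⋯t_m`, if a nonnegative
`β`-integer `y` has `β`-expansion `y_n⋯y_k0^k` with `y_k ≠ 0`, then the
distance from `y` to its predecessor in `ℤ_β` is `T_β^{k'}(1)` with
`k' ≡ k (mod m)`, `0 ≤ k' < m`. -/
theorem stmt_16 (β : ℝ) (hβ : 1 < β) (m : ℕ) (hm : 0 < m) (t : ℕ → ℕ)
    (hT0 : ∀ i : ℕ, i < m → 0 < (fun x : ℝ => Int.fract (β * x))^[i] 1)
    (hTm : (fun x : ℝ => Int.fract (β * x))^[m] 1 = 0)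
    (ht : ∀ i : ℕ, (t (i + 1) : ℤ) = ⌊β * (fun x : ℝ => Int.fract (β * x))^[i] 1⌋)
    (Z : Set ℝ)
    (hZ : Z = {x : ℝ | ∃ L : List ℕ,
        (∀ i, i < L.length →
          List.Lex (· < ·) ((L.take (i + 1)).reverse) ((List.range m).map fun j => t (j + 1))) ∧
        x = ∑ i ∈ Finset.range L.length, (L.getD i 0 : ℝ) * β ^ i})
    (y : ℝ) (L : List ℕ) (k : ℕ)
    (hLadm : ∀ i, i < L.length →
        List.Lex (· < ·) ((L.take (i + 1)).reverse) ((List.range m).map fun j => t (j + 1)))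
    (hy : y = ∑ i ∈ Finset.range L.length, (L.getD i 0 : ℝ) * β ^ i)
    (hk : k < L.length) (hk0 : L.getD k 0 ≠ 0) (hlow : ∀ i, i < k → L.getD i 0 = 0)
    (p : ℝ) (hpZ : p ∈ Z) (hpy : p < y) (hpred : ∀ z ∈ Z, z < y → z ≤ p) :
    y - p = (fun x : ℝ => Int.fract (β * x))^[k % m] 1 :=
  stmt_16_general β hβ m t hT0 hTm ht Z hZ y L k hLadm hy hk hk0 hlow p hpZ hpy hpred
end

section
/- Let d_β(1) = t_1⋯t_{m−1}1 be the Rényi expansion of 1 for a simple Parry number β, with m ≥ 2. Suppose the word t_1⋯t_{m−1} has a non-empty proper border p (a word that is both a proper prefix and a proper suffix) and that t_1⋯t_{m−1} is not an integer power of any word. Then there exist words p', q over the digit alphabet and r ≥ 1 such that d_β(1) = p^r p' q p 1, where p' is a proper prefix of p with |p'| < |p|, q is non-empty, and the first letter q_1 of q satisfies q_1 < p_{|p'|+1}. -/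
/-!
Write `T = pʳ w` with `r` maximal, so that `p` is not a prefix of `w`. Since `T` is not a power,
`w ≠ []`; if `|w| ≤ |p|`, then `p = u w` where `u` is a border of `p`, hence of `T`, and the
minimality of `p` forces `u = []`, i.e. `w = p`, against the maximality of `r`. So `w = x p`
with `x ≠ []`. Let `c` be the longest common prefix of `w` and `p`, with mismatching letters
`a` in `w` and `b` in `p`. The Parry condition at the position of `w` gives `a < b`, and at
position `|x|` it rules out `|c| ≥ |x|`. Hence `x = c q` with `q` starting with `a`, and
`d_β(1) = pʳ c q p 1`.
-/

namespace List

variable {α : Type*}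

theorem exists_eq_append_cons_of_not_prefix_of_not_prefix :
    ∀ {l₁ l₂ : List α}, ¬ l₁ <+: l₂ → ¬ l₂ <+: l₁ →
      ∃ c a b t₁ t₂, a ≠ b ∧ l₁ = c ++ a :: t₁ ∧ l₂ = c ++ b :: t₂
  | [], _, h, _ => absurd nil_prefix h
  | _, [], _, h => absurd nil_prefix h
  | a :: t₁, b :: t₂, h₁, h₂ => by
    by_cases hab : a = b
    · subst hab
      obtain ⟨c, a', b', t₁', t₂', hne, rfl, rfl⟩ :=
        exists_eq_append_cons_of_not_prefix_of_not_prefix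
          (mt (prefix_cons_inj a).2 h₁) (mt (prefix_cons_inj a).2 h₂)
      exact ⟨a :: c, a', b', t₁', t₂', hne, rfl, rfl⟩
    · exact ⟨[], a, b, t₁, t₂, hab, rfl, rfl⟩

theorem exists_eq_flatten_replicate_append_not_prefix {p : List α} (hp : p ≠ []) (l : List α) :
    ∃ r w, l = (replicate r p).flatten ++ w ∧ ¬ p <+: w := by
  by_cases h : p <+: l
  · obtain ⟨l', rfl⟩ := h
    have : l'.length < (p ++ l').length := by simp [length_pos_iff.2 hp]
    obtain ⟨r, w, rfl, hw⟩ := exists_eq_flatten_replicate_append_not_prefix hp l'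
    exact ⟨r + 1, w, by simp [replicate_succ], hw⟩
  · exact ⟨0, l, by simp, h⟩
termination_by l.length

theorem exists_suffix_eq_append_of_suffix_append {p F w : List α} (hF : p <:+ F)
    (h : p <:+ F ++ w) (hw : w.length ≤ p.length) : ∃ u, u <:+ p ∧ p = u ++ w := by
  obtain ⟨u, rfl⟩ := suffix_of_suffix_length_le (suffix_append F w) h hw
  exact ⟨u, suffix_of_suffix_length_le (suffix_append_self_iff.1 h) hF (by simp), rfl⟩

end List

open List

def ParryCondition {α : Type*} [LT α] (D : List α) : Prop :=
  ∀ i : ℕ, 1 ≤ i → i < D.length → Lex (· < ·) (D.drop i) D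

namespace ParryCondition

variable {α : Type*} [LinearOrder α] {D : List α}

theorem not_lt_of_eq_append (hD : ParryCondition D) {u c t₁ t₂ : List α} {a b : α}
    (hu : u ≠ []) (h₁ : D = u ++ c ++ a :: t₁) (h₂ : D = c ++ b :: t₂) : ¬ b < a := by
  intro hba
  have hlt := hD u.length (length_pos_iff.2 hu) (by simp [h₁])
  rw [show D.drop u.length = c ++ a :: t₁ by simp [h₁], h₂] at hlt
  exact List.lt_asymm hlt (append_left_lt (Lex.rel hba))

theorem exists_factorization (hD : ParryCondition D) {F w p e : List α}
    (hDw : D = F ++ w ++ e) (hF : F ≠ []) (hpD : p <+: D) (hpw : p <:+ w)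
    (hlen : p.length < w.length) (hnpw : ¬ p <+: w) :
    ∃ c q t a b, p = c ++ b :: t ∧ w = c ++ a :: q ++ p ∧ a < b := by
  obtain ⟨c, a, b, t₁, t, hne, hwc, hpc⟩ := exists_eq_append_cons_of_not_prefix_of_not_prefix
    (fun h => absurd h.length_le (not_le.2 hlen)) hnpw
  obtain ⟨e', hpD⟩ := hpD
  have hab : a < b := by
    refine lt_of_le_of_ne (not_lt.1 ?_) hne
    exact hD.not_lt_of_eq_append (c := c) (t₁ := t₁ ++ e) (t₂ := t ++ e') hF
      (by simp [hDw, hwc]) (by simp [← hpD, hpc])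
  obtain ⟨x, rfl⟩ := hpw
  have hx : x ≠ [] := by rintro rfl; simp at hlen
  have hcw : c <+: x ++ p := hwc ▸ prefix_append c _
  have hcx : c.length < x.length := by
    by_contra! h
    obtain ⟨c₂, rfl⟩ := prefix_of_prefix_length_le (prefix_append x p) hcw h
    have hp : p = c₂ ++ a :: t₁ := by simpa using hwc
    exact hD.not_lt_of_eq_append (c := c₂) (t₁ := t ++ e') (t₂ := t₁ ++ e') hx
      (by simp [← hpD, hpc]) (by simp [← hpD, hp]) hab
  obtain ⟨_ | ⟨a', q⟩, rfl⟩ := prefix_of_prefix_length_le hcw (prefix_append x p) hcx.le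
  · simp at hcx
  obtain ⟨rfl, -⟩ : a' = a ∧ q ++ p = t₁ := by simpa using hwc
  exact ⟨c, q, t, a', b, hpc, by simp, hab⟩

end ParryCondition

theorem stmt_18_general (T : List ℕ)
    (D : List ℕ) (hD : D = T ++ [1])
    (hParry : ∀ i : ℕ, 1 ≤ i → i < D.length → List.Lex (· < ·) (D.drop i) D)
    (p : List ℕ) (hp : p ≠ []) (hpp : p <+: T) (hps : p <:+ T) (hplt : p.length < T.length)
    (hmin : ∀ q : List ℕ, q ≠ [] → q <+: T → q <:+ T → q.length < T.length →
      p.length ≤ q.length)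
    (hnp : ¬ ∃ (w : List ℕ) (k : ℕ), 2 ≤ k ∧ T = (List.replicate k w).flatten) :
    ∃ (r : ℕ) (p' q : List ℕ), 1 ≤ r ∧ p' <+: p ∧ p'.length < p.length ∧ q ≠ [] ∧
      D = (List.replicate r p).flatten ++ p' ++ q ++ p ++ [1] ∧
      q.headI < p.getD p'.length 0 := by
  obtain ⟨r, w, hTw, hpw⟩ := exists_eq_flatten_replicate_append_not_prefix hp T
  obtain ⟨r, rfl⟩ : ∃ r', r = r' + 1 :=
    Nat.exists_eq_succ_of_ne_zero (by rintro rfl; simp_all)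
  set F := (replicate (r + 1) p).flatten
  have hpF : p <:+ F := by simp [F, replicate_succ']
  have hw : w ≠ [] := by
    rintro rfl
    refine hnp ⟨p, r + 1, ?_, by simpa using hTw⟩
    simp only [hTw, F, append_nil, length_flatten, map_replicate, sum_replicate,
      smul_eq_mul] at hplt
    exact Nat.lt_of_mul_lt_mul_right (a := p.length) (by rwa [one_mul])
  have hlen : p.length < w.length := by
    by_contra! h
    obtain ⟨u, hup, rfl⟩ := exists_suffix_eq_append_of_suffix_append hpF (hTw ▸ hps) h
    have hu : u ≠ [] := by rintro rfl; simp at hpw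
    have := hmin u hu ((prefix_append u w).trans hpp) (hup.trans hps) (by simp at hplt ⊢; omega)
    simp only [length_append] at this
    exact hw (length_eq_zero_iff.1 (by omega))
  obtain ⟨c, q, t, a, b, hpc, hwc, hab⟩ := ParryCondition.exists_factorization hParry
    (e := [1]) (by rw [hD, hTw]) (by simp [F, hp]) (hD ▸ hpp.trans (prefix_append _ _))
    (suffix_of_suffix_length_le (hTw ▸ hps) (suffix_append F w) hlen.le) hlen hpw
  exact ⟨r + 1, c, a :: q, by omega, hpc ▸ prefix_append _ _, by simp [hpc], cons_ne_nil _ _,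
    by simp [hD, hTw, hwc, F], by simp [hpc, hab]⟩

/-- Let `d_β(1) = t_1⋯t_{m−1}1` satisfy the Parry condition. If `T = t_1⋯t_{m−1}`
has a shortest non-empty proper border `p` and `T` is not an integer power of any
word, then `d_β(1) = p^r p' q p 1` with `r ≥ 1`, `p'` a proper prefix of `p`,
`q` non-empty, and the first letter of `q` smaller than `p_{|p'|+1}`. -/
theorem stmt_18 (m : ℕ) (hm : 2 ≤ m) (T : List ℕ) (hT : T.length = m - 1)
    (D : List ℕ) (hD : D = T ++ [1])
    (hParry : ∀ i : ℕ, 1 ≤ i → i < D.length → List.Lex (· < ·) (D.drop i) D)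
    (p : List ℕ) (hp : p ≠ []) (hpp : p <+: T) (hps : p <:+ T) (hplt : p.length < T.length)
    (hmin : ∀ q : List ℕ, q ≠ [] → q <+: T → q <:+ T → q.length < T.length →
      p.length ≤ q.length)
    (hnp : ¬ ∃ (w : List ℕ) (k : ℕ), 2 ≤ k ∧ T = (List.replicate k w).flatten) :
    ∃ (r : ℕ) (p' q : List ℕ), 1 ≤ r ∧ p' <+: p ∧ p'.length < p.length ∧ q ≠ [] ∧
      D = (List.replicate r p).flatten ++ p' ++ q ++ p ++ [1] ∧
      q.headI < p.getD p'.length 0 :=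
  stmt_18_general T D hD hParry p hp hpp hps hplt hmin hnp
end

section
/- Let d_β(1) = t_1 t_2 ⋯ t_{m-1} 1 satisfy the Parry condition, and suppose the prefix p p' q of t_1⋯t_{m−1} = p^r p' q (in the factorization d_β(1) = p^r p' q p 1 with p' a proper prefix of p and q_1 < p_{|p'|+1}) appears. If the word t_1⋯t_{m−1} has prefix p w' p p w' p for some word w' with p w' p a border configuration, then the Parry condition forces p w' = w' p. -/
/-!
Shifting `d_β(1) = p w' p p w' p ⋯` by `|p|` compares `w' p` with `p w'`, and shifting it by
`|p w'|` compares `p p w' ⋯` with `p w' p ⋯`, i.e. after cancelling `p`, `p w'` with `w' p`.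
Since the compared words have equal length, the Parry condition bounds each of them by the
other, so they are equal.
-/

namespace List

variable {α : Type*} [LinearOrder α]

theorem lt_of_append_lt_append_left {l u v : List α} (h : l ++ u < l ++ v) : u < v := by
  induction l with
  | nil => exact h
  | cons a l ih => exact ih (cons_lt_cons_self.mp h)

theorem le_of_append_lt_append_of_length_eq {u v s t : List α} (hl : u.length = v.length)
    (h : u ++ s < v ++ t) : u ≤ v := by
  induction u generalizing v with
  | nil => exact length_eq_zero_iff.mp hl.symm ▸ le_rfl
  | cons a u ih =>
    obtain _ | ⟨b, v⟩ := v
    · simp at hl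
    rw [cons_append, cons_append, cons_lt_cons_iff] at h
    obtain hab | ⟨rfl, h⟩ := h
    · exact le_of_lt (Lex.rel hab)
    · obtain huv | rfl := (ih (by simpa using hl) h).lt_or_eq
      · exact le_of_lt (Lex.cons huv)
      · exact le_rfl

end List

/-- If `d_β(1) = t_1⋯t_{m−1}1` satisfies the Parry condition and `t_1⋯t_{m−1}`
has the prefix `p w' p p w' p`, then the Parry condition forces `p w' = w' p`. -/
theorem stmt_19 (T : List ℕ) (D : List ℕ) (hD : D = T ++ [1])
    (hParry : ∀ i : ℕ, 1 ≤ i → i < D.length → List.Lex (· < ·) (D.drop i) D)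
    (p w' : List ℕ)
    (hpref : (p ++ w' ++ p ++ p ++ w' ++ p) <+: T) :
    p ++ w' = w' ++ p := by
  obtain rfl | hp := eq_or_ne p []
  · simp
  obtain ⟨z, rfl⟩ := hpref
  subst hD
  have hpos : 1 ≤ p.length := List.length_pos_iff.mpr hp
  have shift_p :
      (w' ++ p) ++ (p ++ w' ++ p ++ z ++ [1]) < (p ++ w') ++ (p ++ p ++ w' ++ p ++ z ++ [1]) := by
    simpa using hParry p.length hpos (by simp)
  have shift_pw' :
      p ++ ((p ++ w') ++ (p ++ z ++ [1])) < p ++ ((w' ++ p) ++ (p ++ w' ++ p ++ z ++ [1])) := by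
    simpa using hParry (p ++ w').length (by simp; omega) (by simp)
  exact le_antisymm
    (List.le_of_append_lt_append_of_length_eq (by simp [add_comm])
      (List.lt_of_append_lt_append_left shift_pw'))
    (List.le_of_append_lt_append_of_length_eq (by simp [add_comm]) shift_p)
end
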